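/- arXiv:0807.0905 — 2 statements merged into one kernel-verified Lean document; each statement's English description precedes it below -/
import Mathlib

section
/- Let $f_l(t) = \sum_{i=0}^{l} t^i$ in $\mathbb{Z}[t]$. For integers $n \geq 2$ and odd integers $p, q$ with $3 \leq p \leq q$, the coefficient of $t^3$ in the polynomial $-t f_{2n-2} f_{p-1} f_{q-1} - t f_{2n-1} f_{p-2} f_{q-1} - t f_{2n-1} f_{p-1} f_{q-2} + (1+t) f_{2n-1} f_{p-1} f_{q-1}$ equals $-2$. -/
/-!
Since `(1 - t) f_l = 1 - t^(l+1)` and `(1 - t) f_3 ≡ 1` modulo `t^4`, we get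
`f_l ≡ (1 - t^(l+1)) f_3` modulo `t^4`. For the lengths at hand every correction term
`t^(l+1)` is killed modulo `t^4` after multiplying out, leaving the combination
`≡ (1 - 2t) f_3^3 = (1 - 2t)(1 + 3t + 6t^2 + 10t^3 + ⋯)`, whose `t^3`-coefficient is
`10 - 12 = -2`.
-/

open Polynomial

noncomputable def f (l : ℕ) : Polynomial ℤ := ∑ i ∈ Finset.range (l + 1), X ^ i

open Finset

theorem one_sub_pow_mul_geom_sum_comm {R : Type*} [CommRing R] (x : R) (l m : ℕ) :
    (1 - x ^ l) * ∑ i ∈ range m, x ^ i = (1 - x ^ m) * ∑ i ∈ range l, x ^ i := by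
  rw [← mul_neg_geom_sum x l, ← mul_neg_geom_sum x m]
  ring

theorem pretzel_combination_eq_of_pow_four_eq_zero {R : Type*} [CommRing R] {x s : R}
    (hx : x ^ 4 = 0) {G : ℕ → R} (hG : ∀ l, G l = (1 - x ^ (l + 1)) * s) {a b c : ℕ}
    (ha : 2 ≤ a) (hb : 1 ≤ b) (hc : 1 ≤ c) :
    -(x * G a * G (b + 1) * G (c + 1)) - x * G (a + 1) * G b * G (c + 1)
      - x * G (a + 1) * G (b + 1) * G c + (1 + x) * G (a + 1) * G (b + 1) * G (c + 1)
      = (1 - 2 * x) * s ^ 3 := by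
  have hA : G (a + 1) = s := by rw [hG, pow_eq_zero_of_le (by omega) hx, sub_zero, one_mul]
  rw [hA]
  simp only [hG]
  have hα : x * x ^ (a + 1) = 0 := by rw [← pow_succ', pow_eq_zero_of_le (by omega) hx]
  have hβ : x ^ 2 * x ^ (b + 1) = 0 := by rw [← pow_add, pow_eq_zero_of_le (by omega) hx]
  have hγ : x ^ 2 * x ^ (c + 1) = 0 := by rw [← pow_add, pow_eq_zero_of_le (by omega) hx]
  have hβγ : x ^ (b + 1) * x ^ (c + 1) = 0 := by rw [← pow_add, pow_eq_zero_of_le (by omega) hx]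
  linear_combination
    s ^ 3 * (hα + (1 - x ^ (a + 1)) * (hβ + hγ) + (x ^ 3 * x ^ (a + 1) - x ^ 2) * hβγ)

theorem coeff_eq_of_X_pow_dvd_sub {R : Type*} [Ring R] {p q : R[X]} {n k : ℕ} (h : X ^ n ∣ p - q)
    (hk : k < n) : p.coeff k = q.coeff k := by
  rw [← sub_eq_zero, ← coeff_sub]
  exact X_pow_dvd_iff.mp h k hk

theorem X_pow_four_dvd_f_sub (l : ℕ) : X ^ 4 ∣ f l - (1 - X ^ (l + 1)) * f 3 := by
  refine ⟨f l, ?_⟩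
  rw [f, f, one_sub_pow_mul_geom_sum_comm]
  ring

theorem X_pow_four_dvd_pretzel_combination_sub {a b c : ℕ} (ha : 2 ≤ a) (hb : 1 ≤ b) (hc : 1 ≤ c) :
    X ^ 4 ∣ (-(X * f a * f (b + 1) * f (c + 1)) - X * f (a + 1) * f b * f (c + 1)
      - X * f (a + 1) * f (b + 1) * f c + (1 + X) * f (a + 1) * f (b + 1) * f (c + 1))
      - (1 - 2 * X) * f 3 ^ 3 := by
  set π := Ideal.Quotient.mk (Ideal.span {(X : ℤ[X]) ^ 4})
  rw [← Ideal.mem_span_singleton, ← Ideal.Quotient.eq]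
  have hx : π X ^ 4 = 0 := by
    rw [← map_pow, Ideal.Quotient.eq_zero_iff_mem]
    exact Ideal.mem_span_singleton_self _
  have hG (l : ℕ) : π (f l) = (1 - π X ^ (l + 1)) * π (f 3) := by
    rw [← map_pow, ← map_one π, ← map_sub, ← map_mul, Ideal.Quotient.eq, Ideal.mem_span_singleton]
    exact X_pow_four_dvd_f_sub l
  simp only [map_sub, map_add, map_mul, map_neg, map_one, map_ofNat]
  exact pretzel_combination_eq_of_pow_four_eq_zero hx hG ha hb hc

theorem coeff_three_one_sub_two_X_mul_f_three_pow_three :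
    ((1 - 2 * X) * f 3 ^ 3).coeff 3 = -2 := by
  simp only [f, sum_range_succ, sum_range_zero]
  ring_nf
  simp [coeff_X_pow, coeff_X, coeff_one]

theorem stmt1_general (n p q : ℕ) (hn : 2 ≤ n)
    (hp3 : 3 ≤ p) (hpq : p ≤ q) :
    (-(X * f (2 * n - 2) * f (p - 1) * f (q - 1))
      - X * f (2 * n - 1) * f (p - 2) * f (q - 1)
      - X * f (2 * n - 1) * f (p - 1) * f (q - 2)
      + (1 + X) * f (2 * n - 1) * f (p - 1) * f (q - 1)).coeff 3 = -2 := by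
  rw [show 2 * n - 1 = 2 * n - 2 + 1 by omega, show p - 1 = p - 2 + 1 by omega,
    show q - 1 = q - 2 + 1 by omega]
  have hdvd := X_pow_four_dvd_pretzel_combination_sub (a := 2 * n - 2) (b := p - 2) (c := q - 2)
    (by omega) (by omega) (by omega)
  rw [coeff_eq_of_X_pow_dvd_sub hdvd (by norm_num)]
  exact coeff_three_one_sub_two_X_mul_f_three_pow_three

theorem stmt1 (n p q : ℕ) (hn : 2 ≤ n) (hp : Odd p) (hq : Odd q)
    (hp3 : 3 ≤ p) (hpq : p ≤ q) :
    (-(X * f (2 * n - 2) * f (p - 1) * f (q - 1))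
      - X * f (2 * n - 1) * f (p - 2) * f (q - 1)
      - X * f (2 * n - 1) * f (p - 1) * f (q - 2)
      + (1 + X) * f (2 * n - 1) * f (p - 1) * f (q - 1)).coeff 3 = -2 :=
  stmt1_general n p q hn hp3 hpq
end

section
/- Define polynomials $g_l(t) \in \mathbb{Z}[t, t^{-1}]$ (representing $(-t)^{(l-1)/2}\Delta_l(-t)$) by the property $g_l = f_{l-1} = \sum_{i=0}^{l-1} t^i$. For an integer $n \geq 1$ and odd integers $3 \leq p \leq q$, let $D(t) = -f_{2n-2} f_{p-1} f_{q-1} + f_{2n-1} f_{p-2} f_{q-1} + f_{2n-1} f_{p-1} f_{q-2}$. Then $D(t)$ has a coefficient whose absolute value is at least $3$. -/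
open Polynomial

/-! The coefficient of `t` in `D` is `-(2 + [2n - 2 ≥ 1]) + 3 + 3 ≥ 3`: each `f l` has constant
term `1`, so the linear coefficient of a product of three of them is the number of factors with
`l ≥ 1`. -/

lemma f_coeff (l k : ℕ) : (f l).coeff k = if k ≤ l then 1 else 0 := by
  simp [f, coeff_X_pow]

lemma f_coeff_zero (l : ℕ) : (f l).coeff 0 = 1 := by
  simp [f_coeff]

lemma f_coeff_one_le (l : ℕ) : (f l).coeff 1 ≤ 1 := by
  rw [f_coeff]; split_ifs <;> norm_num

lemma f_coeff_one_of_pos {l : ℕ} (hl : 1 ≤ l) : (f l).coeff 1 = 1 := by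
  simp [f_coeff, hl]

lemma coeff_one_mul_mul_of_coeff_zero_eq_one {R : Type*} [CommSemiring R] {a b c : R[X]}
    (ha : a.coeff 0 = 1) (hb : b.coeff 0 = 1) (hc : c.coeff 0 = 1) :
    (a * b * c).coeff 1 = a.coeff 1 + b.coeff 1 + c.coeff 1 := by
  simp only [mul_coeff_one, mul_coeff_zero, ha, hb, hc]
  ring

lemma coeff_one_f_mul_f_mul_f (a b c : ℕ) :
    (f a * f b * f c).coeff 1 = (f a).coeff 1 + (f b).coeff 1 + (f c).coeff 1 :=
  coeff_one_mul_mul_of_coeff_zero_eq_one (f_coeff_zero a) (f_coeff_zero b) (f_coeff_zero c)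

theorem stmt9_general (n p q : ℕ) (hn : 1 ≤ n)
    (hp3 : 3 ≤ p) (hpq : p ≤ q) :
    ∃ k : ℕ, 3 ≤ |(-(f (2 * n - 2)) * f (p - 1) * f (q - 1)
      + f (2 * n - 1) * f (p - 2) * f (q - 1)
      + f (2 * n - 1) * f (p - 1) * f (q - 2)).coeff k| := by
  refine ⟨1, ?_⟩
  have h2n : (f (2 * n - 1)).coeff 1 = 1 := f_coeff_one_of_pos (by omega)
  have hp1 : (f (p - 1)).coeff 1 = 1 := f_coeff_one_of_pos (by omega)
  have hp2 : (f (p - 2)).coeff 1 = 1 := f_coeff_one_of_pos (by omega)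
  have hq1 : (f (q - 1)).coeff 1 = 1 := f_coeff_one_of_pos (by omega)
  have hq2 : (f (q - 2)).coeff 1 = 1 := f_coeff_one_of_pos (by omega)
  have hle := f_coeff_one_le (2 * n - 2)
  rw [neg_mul, neg_mul, coeff_add, coeff_add, coeff_neg, coeff_one_f_mul_f_mul_f,
    coeff_one_f_mul_f_mul_f, coeff_one_f_mul_f_mul_f, h2n, hp1, hp2, hq1, hq2]
  rw [abs_of_nonneg (by linarith)]
  linarith

theorem stmt9 (n p q : ℕ) (hn : 1 ≤ n) (hp : Odd p) (hq : Odd q)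
    (hp3 : 3 ≤ p) (hpq : p ≤ q) :
    ∃ k : ℕ, 3 ≤ |(-(f (2 * n - 2)) * f (p - 1) * f (q - 1)
      + f (2 * n - 1) * f (p - 2) * f (q - 1)
      + f (2 * n - 1) * f (p - 1) * f (q - 2)).coeff k| :=
  stmt9_general n p q hn hp3 hpq
end
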